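/- Let Ẑ_σ : H⊕H → H⊕H denote the operator (v₀, v₁) ↦ (v₀, −v₁) (the action of σ_Z ⊗ 1 under the identification ℂ²⊗H ≅ H⊕H). Then for every linear operator Z on H and every vector ψ ∈ H, ‖V Z ψ − Ẑ_σ V ψ‖ = ‖(Z − Z̃)ψ‖. -/

import Mathlib

/-! `P⁰Z̃ = P⁰` and `P¹Z̃ = −P¹`, so `σ_Z V ψ = V Z̃ ψ` and the left-hand side is `‖V (Z − Z̃) ψ‖`.
Finally `V` is an isometry: `P⁰φ ⊥ P¹φ` with `P⁰φ + P¹φ = φ`, and `X̃` preserves norms. -/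

/-- The projection `P⁰ = (1 + Z̃)/2`. -/
noncomputable def Pb0 {H : Type*} [AddCommGroup H] [Module ℂ H]
    (Zt : H →ₗ[ℂ] H) : H →ₗ[ℂ] H := ((1 : ℂ) / 2) • (1 + Zt)

/-- The projection `P¹ = (1 − Z̃)/2`. -/
noncomputable def Pb1 {H : Type*} [AddCommGroup H] [Module ℂ H]
    (Zt : H →ₗ[ℂ] H) : H →ₗ[ℂ] H := ((1 : ℂ) / 2) • (1 - Zt)

/-- The SWAP-gate map `V : H → H⊕H`, `Vψ = (P⁰ψ, X̃P¹ψ)`. -/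
noncomputable def VL {H : Type*} [AddCommGroup H] [Module ℂ H]
    (Zt Xt : H →ₗ[ℂ] H) : H →ₗ[ℂ] WithLp 2 (H × H) :=
  (WithLp.linearEquiv 2 ℂ (H × H)).symm.toLinearMap ∘ₗ
    LinearMap.prod (Pb0 Zt) (Xt ∘ₗ Pb1 Zt)

/-- The operator `σ_Z ⊗ 1` on `H⊕H`: `(v₀, v₁) ↦ (v₀, −v₁)`. -/
noncomputable def Zsig {H : Type*} [AddCommGroup H] [Module ℂ H] :
    WithLp 2 (H × H) →ₗ[ℂ] WithLp 2 (H × H) :=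
  (WithLp.linearEquiv 2 ℂ (H × H)).symm.toLinearMap ∘ₗ
    LinearMap.prodMap (LinearMap.id : H →ₗ[ℂ] H) (-(LinearMap.id : H →ₗ[ℂ] H)) ∘ₗ
      (WithLp.linearEquiv 2 ℂ (H × H)).toLinearMap

section Projections

variable {H : Type*} [AddCommGroup H] [Module ℂ H] {Zt : H →ₗ[ℂ] H}

theorem Pb0_add_Pb1 : Pb0 Zt + Pb1 Zt = 1 := by
  simp only [Pb0, Pb1, ← smul_add]
  module

theorem Pb0_mul_of_mul_self_eq_one (hZsq : Zt * Zt = 1) : Pb0 Zt * Zt = Pb0 Zt := by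
  simp only [Pb0, smul_mul_assoc, add_mul, one_mul, hZsq, add_comm]

theorem Pb1_mul_of_mul_self_eq_one (hZsq : Zt * Zt = 1) : Pb1 Zt * Zt = -Pb1 Zt := by
  simp only [Pb1, smul_mul_assoc, sub_mul, one_mul, hZsq, ← smul_neg, neg_sub]

theorem VL_apply (Xt : H →ₗ[ℂ] H) (ψ : H) :
    VL Zt Xt ψ = WithLp.toLp 2 (Pb0 Zt ψ, Xt (Pb1 Zt ψ)) := rfl

theorem Zsig_apply (v : WithLp 2 (H × H)) : Zsig v = WithLp.toLp 2 (v.fst, -v.snd) := rfl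

theorem Zsig_VL (Xt : H →ₗ[ℂ] H) (hZsq : Zt * Zt = 1) (ψ : H) :
    Zsig (VL Zt Xt ψ) = VL Zt Xt (Zt ψ) := by
  rw [Zsig_apply, VL_apply, VL_apply, ← Module.End.mul_apply (Pb0 Zt),
    ← Module.End.mul_apply (Pb1 Zt), Pb0_mul_of_mul_self_eq_one hZsq,
    Pb1_mul_of_mul_self_eq_one hZsq, LinearMap.neg_apply, map_neg]
  rfl

end Projections

section Isometry

variable {H : Type*} [NormedAddCommGroup H] [InnerProductSpace ℂ H]

theorem inner_Pb0_Pb1_eq_zero {Zt : H →ₗ[ℂ] H} (hZt : Zt.IsSymmetric) (hZsq : Zt * Zt = 1)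
    (φ : H) : inner ℂ (Pb0 Zt φ) (Pb1 Zt φ) = 0 := by
  have hZZ : Zt (Zt φ) = φ := LinearMap.congr_fun hZsq φ
  simp only [Pb0, Pb1, LinearMap.smul_apply, LinearMap.add_apply, LinearMap.sub_apply,
    Module.End.one_apply, inner_smul_left, inner_smul_right, inner_add_left, inner_sub_right,
    hZt φ (Zt φ), hZZ, hZt φ φ]
  ring

theorem norm_sq_Pb0_add_norm_sq_Pb1 {Zt : H →ₗ[ℂ] H} (hZt : Zt.IsSymmetric)
    (hZsq : Zt * Zt = 1) (φ : H) : ‖Pb0 Zt φ‖ ^ 2 + ‖Pb1 Zt φ‖ ^ 2 = ‖φ‖ ^ 2 := by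
  rw [sq, sq, ← norm_add_sq_eq_norm_sq_add_norm_sq_of_inner_eq_zero _ _
    (inner_Pb0_Pb1_eq_zero hZt hZsq φ), ← LinearMap.add_apply, Pb0_add_Pb1,
    Module.End.one_apply, sq]

theorem LinearMap.norm_map_of_adjoint_mul_self_eq_one [FiniteDimensional ℂ H]
    {X : H →ₗ[ℂ] H} (hX : LinearMap.adjoint X * X = 1) (v : H) : ‖X v‖ = ‖v‖ :=
  (LinearMap.norm_map_iff_inner_map_map X).mpr (fun x y => by
    rw [← LinearMap.adjoint_inner_right, ← Module.End.mul_apply, hX, Module.End.one_apply]) v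

theorem norm_VL [FiniteDimensional ℂ H] {Zt Xt : H →ₗ[ℂ] H} (hZt : Zt.IsSymmetric)
    (hZsq : Zt * Zt = 1) (hXt : LinearMap.adjoint Xt * Xt = 1) (φ : H) :
    ‖VL Zt Xt φ‖ = ‖φ‖ := by
  have hsq : ‖VL Zt Xt φ‖ ^ 2 = ‖φ‖ ^ 2 := by
    rw [WithLp.prod_norm_sq_eq_of_L2, ← norm_sq_Pb0_add_norm_sq_Pb1 hZt hZsq φ, VL_apply,
      WithLp.toLp_fst, WithLp.toLp_snd, LinearMap.norm_map_of_adjoint_mul_self_eq_one hXt]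
  exact (sq_eq_sq₀ (norm_nonneg _) (norm_nonneg _)).mp hsq

end Isometry

theorem swap_isometry_Z_intertwine_general {H : Type*} [NormedAddCommGroup H]
    [InnerProductSpace ℂ H] [FiniteDimensional ℂ H]
    (Zt Xt : H →ₗ[ℂ] H) (hZt : Zt.IsSymmetric) (hZsq : Zt * Zt = 1)
    (hXt₁ : LinearMap.adjoint Xt * Xt = 1)
    (Z : H →ₗ[ℂ] H) (ψ : H) :
    ‖VL Zt Xt (Z ψ) - Zsig (VL Zt Xt ψ)‖ = ‖(Z - Zt) ψ‖ := by
  rw [Zsig_VL Xt hZsq, ← map_sub, ← LinearMap.sub_apply, norm_VL hZt hZsq hXt₁]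

/-- For every linear operator `Z` on `H` and every `ψ ∈ H`,
`‖V Z ψ − (σ_Z ⊗ 1) V ψ‖ = ‖(Z − Z̃)ψ‖`. -/
theorem swap_isometry_Z_intertwine {H : Type*} [NormedAddCommGroup H]
    [InnerProductSpace ℂ H] [FiniteDimensional ℂ H]
    (Zt Xt : H →ₗ[ℂ] H) (hZt : Zt.IsSymmetric) (hZsq : Zt * Zt = 1)
    (hXt₁ : LinearMap.adjoint Xt * Xt = 1) (hXt₂ : Xt * LinearMap.adjoint Xt = 1)
    (Z : H →ₗ[ℂ] H) (ψ : H) :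
    ‖VL Zt Xt (Z ψ) - Zsig (VL Zt Xt ψ)‖ = ‖(Z - Zt) ψ‖ :=
  swap_isometry_Z_intertwine_general Zt Xt hZt hZsq hXt₁ Z ψ
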